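/- arXiv:1611.02812 — 6 statements merged into one kernel-verified Lean document; each statement's English description precedes it below -/
import Mathlib

section
/- Let ν ≥ 1 and Λ₀ > 0. Define for a real number u the truncation u₊ = max{0, u}, and define the remainder R(u,h) = (u+h)₊^ν − u₊^ν − ν u₊^{ν−1} h. Then there exists a constant C (depending only on ν and Λ₀) such that for all u, h with |u| ≤ Λ₀ and |u+h| ≤ Λ₀, one has |R(u,h)| ≤ C |h|^{min(ν,2)}. -/
/-!
For `ν > 1` the truncated power `f t = t₊ ^ ν` is differentiable with derivative
`ν t₊ ^ (ν - 1)`, and this derivative is Hölder continuous of exponent `min ν 2 - 1` on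
`[-Λ₀, Λ₀]`: for exponents `p ≤ 1` because `t ↦ t ^ p` is subadditive on `[0, ∞)`,
for `p ≥ 1` by the mean value theorem. The mean value inequality for `t ↦ f t - f' u * t`
on the segment between `u` and `u + h` then bounds the remainder by `C |h| ^ min ν 2`.
For `ν = 1`, the map `t ↦ t₊` is `1`-Lipschitz, so the remainder is at most `2 |h|`.
-/

open Real Set Topology Asymptotics

theorem abs_sub_sub_mul_le_of_abs_sub_le_rpow {f g : ℝ → ℝ} {u h L α : ℝ}
    (hL : 0 ≤ L) (hα : 0 ≤ α)
    (hf : ∀ x ∈ uIcc u (u + h), HasDerivWithinAt f (g x) (uIcc u (u + h)) x)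
    (hg : ∀ x ∈ uIcc u (u + h), |g x - g u| ≤ L * |x - u| ^ α) :
    |f (u + h) - f u - g u * h| ≤ L * |h| ^ (α + 1) := by
  have hdist : ∀ x ∈ uIcc u (u + h), |x - u| ≤ |h| := fun x hx => by
    simpa using abs_sub_left_of_mem_uIcc hx
  have hmvt := Convex.norm_image_sub_le_of_norm_hasDerivWithin_le
    (f := fun x => f x - g u * x) (f' := fun x => g x - g u) (C := L * |h| ^ α)
    (fun x hx => ((hf x hx).sub ((hasDerivAt_id x).const_mul (g u)).hasDerivWithinAt).congr_deriv
      (by ring))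
    (fun x hx => (hg x hx).trans <|
      mul_le_mul_of_nonneg_left (rpow_le_rpow (abs_nonneg _) (hdist x hx) hα) hL)
    (convex_uIcc _ _) left_mem_uIcc right_mem_uIcc
  rw [rpow_add_one' (abs_nonneg h) (by linarith), ← mul_assoc]
  simp only [Real.norm_eq_abs, add_sub_cancel_left] at hmvt
  convert hmvt using 2
  ring

theorem abs_rpow_sub_rpow_le_rpow_abs_sub {p x y : ℝ} (hp₀ : 0 ≤ p) (hp₁ : p ≤ 1)
    (hx : 0 ≤ x) (hy : 0 ≤ y) : |x ^ p - y ^ p| ≤ |x - y| ^ p := by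
  wlog hyx : y ≤ x generalizing x y
  · rw [abs_sub_comm, abs_sub_comm x]
    exact this hy hx (le_of_not_ge hyx)
  have hsub : x ^ p ≤ (x - y) ^ p + y ^ p := by
    simpa using rpow_add_le_add_rpow (sub_nonneg.2 hyx) hy hp₀ hp₁
  rw [abs_of_nonneg (sub_nonneg.2 (rpow_le_rpow hy hyx hp₀)), abs_of_nonneg (sub_nonneg.2 hyx)]
  linarith

theorem abs_rpow_sub_rpow_le_mul_abs_sub {p Λ x y : ℝ} (hp : 1 ≤ p)
    (hx : x ∈ Icc 0 Λ) (hy : y ∈ Icc 0 Λ) :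
    |x ^ p - y ^ p| ≤ p * Λ ^ (p - 1) * |x - y| := by
  have hderiv : ∀ t ∈ Icc 0 Λ,
      HasDerivWithinAt (fun t => t ^ p) (p * t ^ (p - 1)) (Icc 0 Λ) t :=
    fun t _ => (hasDerivAt_rpow_const (Or.inr hp)).hasDerivWithinAt
  have hbound : ∀ t ∈ Icc 0 Λ, ‖p * t ^ (p - 1)‖ ≤ p * Λ ^ (p - 1) := fun t ht => by
    rw [Real.norm_eq_abs, abs_of_nonneg (by have := ht.1; positivity)]
    gcongr
    exacts [ht.1, ht.2]
  simpa using (convex_Icc 0 Λ).norm_image_sub_le_of_norm_hasDerivWithin_le hderiv hbound hy hx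

theorem hasDerivAt_max_zero_rpow_zero {ν : ℝ} (hν : 1 < ν) :
    HasDerivAt (fun t : ℝ => max 0 t ^ ν) 0 0 := by
  rw [hasDerivAt_iff_isLittleO]
  simp only [max_self, zero_rpow (by linarith : ν ≠ 0), sub_zero, smul_zero]
  have hsplit : (fun t : ℝ => max 0 t ^ ν) = fun t => max 0 t ^ (ν - 1) * max 0 t := by
    ext t
    rw [← rpow_add_one' (le_max_left 0 t) (by linarith), sub_add_cancel]
  have hsmall : (fun t : ℝ => max 0 t ^ (ν - 1)) =o[𝓝 0] fun _ => (1 : ℝ) := by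
    rw [isLittleO_one_iff]
    have hcont : Continuous fun t : ℝ => max 0 t ^ (ν - 1) :=
      (continuous_const.max continuous_id).rpow_const fun _ => Or.inr (by linarith)
    simpa [zero_rpow (by linarith : ν - 1 ≠ 0)] using hcont.tendsto 0
  have hlin : (fun t : ℝ => max 0 t) =O[𝓝 0] fun t => t :=
    isBigO_of_le _ fun t => by
      simpa [abs_of_nonneg (le_max_left 0 t)] using max_le (abs_nonneg t) (le_abs_self t)
  simpa [hsplit] using hsmall.mul_isBigO hlin

theorem hasDerivAt_max_zero_rpow {ν : ℝ} (hν : 1 < ν) (x : ℝ) :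
    HasDerivAt (fun t : ℝ => max 0 t ^ ν) (ν * max 0 x ^ (ν - 1)) x := by
  rcases lt_trichotomy x 0 with hx | rfl | hx
  · have hzero : (fun t : ℝ => max 0 t ^ ν) =ᶠ[𝓝 x] fun _ => 0 := by
      filter_upwards [Iio_mem_nhds hx] with t ht
      rw [max_eq_left ht.le, zero_rpow (by linarith)]
    rw [max_eq_left hx.le, zero_rpow (by linarith), mul_zero]
    exact (hasDerivAt_const x 0).congr_of_eventuallyEq hzero
  · rw [max_self, zero_rpow (by linarith), mul_zero]
    exact hasDerivAt_max_zero_rpow_zero hν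
  · have hpos : (fun t : ℝ => max 0 t ^ ν) =ᶠ[𝓝 x] fun t => t ^ ν := by
      filter_upwards [Ioi_mem_nhds hx] with t ht
      rw [max_eq_right ht.le]
    rw [max_eq_right hx.le]
    exact (hasDerivAt_rpow_const (Or.inl hx.ne')).congr_of_eventuallyEq hpos

theorem exists_abs_max_zero_rpow_sub_le {p Λ : ℝ} (hp : 0 ≤ p) (hΛ : 0 < Λ) :
    ∃ L, 0 < L ∧ ∀ a ∈ Icc (-Λ) Λ, ∀ b ∈ Icc (-Λ) Λ,
      |max 0 a ^ p - max 0 b ^ p| ≤ L * |a - b| ^ min p 1 := by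
  have htrunc : ∀ a b : ℝ, |max 0 a - max 0 b| ≤ |a - b| := fun a b => by
    simpa only [max_comm] using abs_max_sub_max_le_abs a b 0
  rcases le_total p 1 with hp₁ | hp₁
  · refine ⟨1, one_pos, fun a _ b _ => ?_⟩
    rw [one_mul, min_eq_left hp₁]
    exact (abs_rpow_sub_rpow_le_rpow_abs_sub hp hp₁ (le_max_left 0 a) (le_max_left 0 b)).trans
      (rpow_le_rpow (abs_nonneg _) (htrunc a b) hp)
  · refine ⟨p * Λ ^ (p - 1), by positivity, fun a ha b hb => ?_⟩
    have hmem : ∀ c ∈ Icc (-Λ) Λ, max 0 c ∈ Icc 0 Λ := fun c hc =>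
      ⟨le_max_left 0 c, max_le hΛ.le hc.2⟩
    rw [min_eq_right hp₁, rpow_one]
    exact (abs_rpow_sub_rpow_le_mul_abs_sub hp₁ (hmem a ha) (hmem b hb)).trans
      (mul_le_mul_of_nonneg_left (htrunc a b) (by positivity))

theorem exists_abs_max_zero_rpow_remainder_le {ν Λ : ℝ} (hν : 1 < ν) (hΛ : 0 < Λ) :
    ∃ C, 0 < C ∧ ∀ u h : ℝ, |u| ≤ Λ → |u + h| ≤ Λ →
      |max 0 (u + h) ^ ν - max 0 u ^ ν - ν * max 0 u ^ (ν - 1) * h| ≤ C * |h| ^ min ν 2 := by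
  obtain ⟨L, hL, hholder⟩ := exists_abs_max_zero_rpow_sub_le (p := ν - 1) (by linarith) hΛ
  refine ⟨ν * L, by positivity, fun u h hu huh => ?_⟩
  have hseg : uIcc u (u + h) ⊆ Icc (-Λ) Λ := uIcc_subset_Icc (abs_le.1 hu) (abs_le.1 huh)
  have hexp : min ν 2 = min (ν - 1) 1 + 1 := by
    rw [← min_add_add_right]
    norm_num
  rw [hexp]
  refine abs_sub_sub_mul_le_of_abs_sub_le_rpow (by positivity) (by positivity)
    (fun x _ => (hasDerivAt_max_zero_rpow hν x).hasDerivWithinAt) fun x hx => ?_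
  rw [← mul_sub, abs_mul, abs_of_pos (by linarith), mul_assoc]
  exact mul_le_mul_of_nonneg_left (hholder x (hseg hx) u (hseg left_mem_uIcc)) (by linarith)

theorem abs_max_zero_add_sub_max_zero_sub_ite_le (u h : ℝ) :
    |max 0 (u + h) - max 0 u - (if 0 < u then h else 0)| ≤ 2 * |h| := by
  have htrunc : |max 0 (u + h) - max 0 u| ≤ |h| := by
    simpa only [max_comm, add_sub_cancel_left] using abs_max_sub_max_le_abs (u + h) u 0
  split_ifs
  · linarith [abs_sub (max 0 (u + h) - max 0 u) h]
  · rw [sub_zero]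
    linarith [abs_nonneg h]

theorem stmt_2 (ν Λ₀ : ℝ) (hν : 1 ≤ ν) (hΛ : 0 < Λ₀) :
    ∃ C : ℝ, 0 < C ∧ ∀ u h : ℝ, |u| ≤ Λ₀ → |u + h| ≤ Λ₀ →
      |(max 0 (u + h)) ^ ν - (max 0 u) ^ ν -
        (if 0 < u then ν * u ^ (ν - 1) * h else 0)| ≤ C * |h| ^ (min ν 2) := by
  rcases hν.eq_or_lt with rfl | hν
  · refine ⟨2, two_pos, fun u h _ _ => ?_⟩
    simpa using abs_max_zero_add_sub_max_zero_sub_ite_le u h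
  · obtain ⟨C, hC, hremainder⟩ := exists_abs_max_zero_rpow_remainder_le hν hΛ
    refine ⟨C, hC, fun u h hu huh => ?_⟩
    have hlinear : (if 0 < u then ν * u ^ (ν - 1) * h else 0) = ν * max 0 u ^ (ν - 1) * h := by
      split_ifs with hu₀
      · rw [max_eq_right hu₀.le]
      · rw [max_eq_left (not_lt.1 hu₀), zero_rpow (by linarith), mul_zero, zero_mul]
    rw [hlinear]
    exact hremainder u h hu huh
end

section
/- Let θ be the Lane–Emden function of index ν (1 < ν < 5), positive on [0, ξ₁) with θ(0)=1, θ'(0)=0, and let r₁ ∈ (0, ξ₁) be a critical point of g(r) = r²θ(r)^{ν−1}, so that ∫₀^{r₁} θ^ν r² dr = (2/(ν−1)) θ(r₁) r₁. Then the identity ∫₀^{r₁} θ(r)^ν r² dr = (r₁³/3) θ(r₁)^ν + (ν/6)(2/(ν−1))² θ(r₁) r₁ + (ν/6) Q holds, where Q = ∫₀^{r₁} [(r θ'(r) + θ(r)) / (θ(r)² r²)] (∫₀^r θ(s)^ν s² ds)² dr. -/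
/-!
Write `M r = ∫₀^r θ^ν s² ds` and `ψ` for the one-sided derivative of `θ` on `[0, ξ₁]`.
The Lane–Emden equation says `(r² ψ)' = -r² θ^ν`, so `M = -r² ψ`. With this, a direct
computation using the equation for `ψ'` shows that `K r = (r³/3) θ^ν + (ν/6) r³ ψ² / θ` has
`K' = r² θ^ν - (ν/6) (r ψ + θ) r² ψ² / θ²` (this packages the two integrations by parts),
and `K 0 = 0`. At `r₁` the boundary term is `(ν/6) M(r₁)² / (θ(r₁) r₁)`, which the critical
point relation turns into the stated one.
-/

open Set MeasureTheory intervalIntegral Filter Topology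

theorem ContDiffOn.exists_hasDerivAt_Icc {f : ℝ → ℝ} {a b : ℝ} (hab : a < b)
    (hf : ContDiffOn ℝ 2 f (Icc a b)) :
    ∃ g : ℝ → ℝ, ContinuousOn g (Icc a b) ∧
      ∀ x ∈ Ioo a b, HasDerivAt f (g x) x ∧ HasDerivAt g (deriv (deriv f) x) x := by
  have hU : UniqueDiffOn ℝ (Icc a b) := uniqueDiffOn_Icc hab
  have hg : ContDiffOn ℝ 1 (derivWithin f (Icc a b)) (Icc a b) :=
    hf.derivWithin hU (by norm_num)
  refine ⟨derivWithin f (Icc a b), hg.continuousOn, fun x hx => ⟨?_, ?_⟩⟩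
  · have hS : Icc a b ∈ 𝓝 x := Icc_mem_nhds hx.1 hx.2
    rw [derivWithin_of_mem_nhds hS]
    exact ((hf.differentiableOn (by norm_num) x (Ioo_subset_Icc_self hx)).differentiableAt
      hS).hasDerivAt
  · have hfg : derivWithin f (Icc a b) =ᶠ[𝓝 x] deriv f := by
      filter_upwards [isOpen_Ioo.mem_nhds hx] with y hy
      exact derivWithin_of_mem_nhds (Icc_mem_nhds hy.1 hy.2)
    rw [← hfg.deriv_eq]
    exact ((hg.differentiableOn one_ne_zero x (Ioo_subset_Icc_self hx)).differentiableAt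
      (Icc_mem_nhds hx.1 hx.2)).hasDerivAt

/-- The Lane–Emden equation `θ'' + (2/r) θ' + θ^ν = 0` on `[0, b]`, for positive `θ`, as a
first-order system for `(θ, ψ = θ')` with `ψ` continuous up to the endpoints. -/
structure LaneEmdenSolOn (ν b : ℝ) (θ ψ : ℝ → ℝ) : Prop where
  continuousOn : ContinuousOn θ (Icc 0 b)
  continuousOn_deriv : ContinuousOn ψ (Icc 0 b)
  pos : ∀ x ∈ Icc 0 b, 0 < θ x
  hasDerivAt : ∀ x ∈ Ioo 0 b, HasDerivAt θ (ψ x) x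
  hasDerivAt_deriv : ∀ x ∈ Ioo 0 b, HasDerivAt ψ (-(2 / x * ψ x) - θ x ^ ν) x

namespace LaneEmdenSolOn

variable {ν b c : ℝ} {θ ψ : ℝ → ℝ}

theorem mono (h : LaneEmdenSolOn ν b θ ψ) (hcb : c ≤ b) : LaneEmdenSolOn ν c θ ψ where
  continuousOn := h.continuousOn.mono (Icc_subset_Icc_right hcb)
  continuousOn_deriv := h.continuousOn_deriv.mono (Icc_subset_Icc_right hcb)
  pos x hx := h.pos x (Icc_subset_Icc_right hcb hx)
  hasDerivAt x hx := h.hasDerivAt x (Ioo_subset_Ioo_right hcb hx)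
  hasDerivAt_deriv x hx := h.hasDerivAt_deriv x (Ioo_subset_Ioo_right hcb hx)

theorem continuousOn_rpow (h : LaneEmdenSolOn ν b θ ψ) :
    ContinuousOn (fun r => θ r ^ ν) (Icc 0 b) :=
  h.continuousOn.rpow_const fun x hx => Or.inl (h.pos x hx).ne'

theorem integral_rpow_mul_sq_eq_neg_sq_mul (h : LaneEmdenSolOn ν b θ ψ) (hb : 0 ≤ b) :
    ∫ r in (0:ℝ)..b, θ r ^ ν * r ^ 2 = -(b ^ 2 * ψ b) := by
  have hderiv : ∀ x ∈ Ioo 0 b,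
      HasDerivAt (fun r => -(r ^ 2 * ψ r)) (θ x ^ ν * x ^ 2) x := fun x hx =>
    ((hasDerivAt_pow 2 x).mul (h.hasDerivAt_deriv x hx)).neg.congr_deriv (by
      field_simp [hx.1.ne']
      ring)
  rw [integral_eq_sub_of_hasDerivAt_of_le hb
    ((continuousOn_pow 2).mul h.continuousOn_deriv).neg hderiv
    ((h.continuousOn_rpow.mul (continuousOn_pow 2)).intervalIntegrable_of_Icc hb)]
  simp

theorem integral_rpow_mul_sq_eq_add (h : LaneEmdenSolOn ν b θ ψ) (hb : 0 ≤ b) :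
    ∫ r in (0:ℝ)..b, θ r ^ ν * r ^ 2 =
      b ^ 3 / 3 * θ b ^ ν + ν / 6 * (b ^ 3 * ψ b ^ 2 / θ b) +
      ν / 6 * ∫ r in (0:ℝ)..b, (r * ψ r + θ r) * r ^ 2 * ψ r ^ 2 / θ r ^ 2 := by
  set q := fun r => (r * ψ r + θ r) * r ^ 2 * ψ r ^ 2 / θ r ^ 2
  set K := fun r => r ^ 3 / 3 * θ r ^ ν + ν / 6 * (r ^ 3 * ψ r ^ 2 / θ r)
  have hθ0 : ∀ x ∈ Icc 0 b, θ x ≠ 0 := fun x hx => (h.pos x hx).ne'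
  have hqC : ContinuousOn q (Icc 0 b) :=
    ((continuousOn_id.mul h.continuousOn_deriv).add h.continuousOn |>.mul
      (continuousOn_pow 2) |>.mul (h.continuousOn_deriv.pow 2)).div
      (h.continuousOn.pow 2) fun x hx => pow_ne_zero 2 (hθ0 x hx)
  have hKC : ContinuousOn K (Icc 0 b) :=
    ((continuousOn_pow 3).div_const 3 |>.mul h.continuousOn_rpow).add
      (continuousOn_const.mul (((continuousOn_pow 3).mul (h.continuousOn_deriv.pow 2)).div
        h.continuousOn hθ0))
  have hK' : ∀ x ∈ Ioo 0 b, HasDerivAt K (θ x ^ ν * x ^ 2 - ν / 6 * q x) x := by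
    intro x hx
    have hθx := h.hasDerivAt x hx
    have hx0 : θ x ≠ 0 := hθ0 x (Ioo_subset_Icc_self hx)
    have hK := (((hasDerivAt_pow 3 x).div_const 3).mul
      (hθx.rpow_const (p := ν) (Or.inl hx0))).add
      ((((hasDerivAt_pow 3 x).mul ((h.hasDerivAt_deriv x hx).pow 2)).div hθx hx0).const_mul
        (ν / 6))
    refine hK.congr_deriv ?_
    simp only [q, Pi.mul_apply, Pi.pow_apply]
    rw [Real.rpow_sub_one hx0]
    field_simp [hx.1.ne']
    ring
  have hfI : IntervalIntegrable (fun r => θ r ^ ν * r ^ 2) volume 0 b :=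
    (h.continuousOn_rpow.mul (continuousOn_pow 2)).intervalIntegrable_of_Icc hb
  have hqI : IntervalIntegrable (fun r => ν / 6 * q r) volume 0 b :=
    (hqC.intervalIntegrable_of_Icc hb).const_mul _
  have hFTC := integral_eq_sub_of_hasDerivAt_of_le hb hKC hK' (hfI.sub hqI)
  have hK0 : K 0 = 0 := by simp [K]
  rw [integral_sub hfI hqI, intervalIntegral.integral_const_mul, hK0, sub_zero] at hFTC
  simp only [K] at hFTC
  linarith

end LaneEmdenSolOn

theorem stmt_6_general (ν ξ₁ : ℝ)
    (θ : ℝ → ℝ) (hC2 : ContDiffOn ℝ 2 θ (Set.Icc 0 ξ₁))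
    (hode : ∀ r ∈ Set.Ioo 0 ξ₁,
      deriv (deriv θ) r + (2 / r) * deriv θ r + θ r ^ ν = 0)
    (hpos : ∀ r ∈ Set.Ico 0 ξ₁, 0 < θ r)
    (r₁ : ℝ) (hr₁ : r₁ ∈ Set.Ioo 0 ξ₁)
    (hint : (∫ r in (0:ℝ)..r₁, θ r ^ ν * r ^ 2) = (2 / (ν - 1)) * θ r₁ * r₁) :
    (∫ r in (0:ℝ)..r₁, θ r ^ ν * r ^ 2) =
      (r₁ ^ 3 / 3) * θ r₁ ^ ν + (ν / 6) * (2 / (ν - 1)) ^ 2 * θ r₁ * r₁ +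
      (ν / 6) * ∫ r in (0:ℝ)..r₁,
        ((r * deriv θ r + θ r) / (θ r ^ 2 * r ^ 2)) *
          (∫ s in (0:ℝ)..r, θ s ^ ν * s ^ 2) ^ 2 := by
  obtain ⟨hr₁0, hr₁ξ⟩ := hr₁
  obtain ⟨ψ, hψ, hderiv⟩ := hC2.exists_hasDerivAt_Icc (hr₁0.trans hr₁ξ)
  have hsol : LaneEmdenSolOn ν r₁ θ ψ :=
    { continuousOn := hC2.continuousOn.mono (Icc_subset_Icc_right hr₁ξ.le)
      continuousOn_deriv := hψ.mono (Icc_subset_Icc_right hr₁ξ.le)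
      pos := fun x hx => hpos x ⟨hx.1, hx.2.trans_lt hr₁ξ⟩
      hasDerivAt := fun x hx => (hderiv x ⟨hx.1, hx.2.trans hr₁ξ⟩).1
      hasDerivAt_deriv := fun x hx => by
        have hxξ : x ∈ Ioo 0 ξ₁ := ⟨hx.1, hx.2.trans hr₁ξ⟩
        obtain ⟨hθx, hψx⟩ := hderiv x hxξ
        have hode_x := hode x hxξ
        rw [hθx.deriv] at hode_x
        exact hψx.congr_deriv (by linarith) }
  have hmass : ∀ r ∈ Icc 0 r₁, ∫ s in (0:ℝ)..r, θ s ^ ν * s ^ 2 = -(r ^ 2 * ψ r) :=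
    fun r hr => (hsol.mono hr.2).integral_rpow_mul_sq_eq_neg_sq_mul hr.1
  have hbdry : r₁ ^ 3 * ψ r₁ ^ 2 / θ r₁ = (2 / (ν - 1)) ^ 2 * θ r₁ * r₁ := by
    have hsq := congrArg (· ^ 2) ((hmass r₁ ⟨hr₁0.le, le_rfl⟩).symm.trans hint)
    field_simp [(hsol.pos r₁ ⟨hr₁0.le, le_rfl⟩).ne', hr₁0.ne'] at hsq ⊢
    linear_combination hsq
  have hQ : ∫ r in (0:ℝ)..r₁, ((r * deriv θ r + θ r) / (θ r ^ 2 * r ^ 2)) *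
        (∫ s in (0:ℝ)..r, θ s ^ ν * s ^ 2) ^ 2 =
      ∫ r in (0:ℝ)..r₁, (r * ψ r + θ r) * r ^ 2 * ψ r ^ 2 / θ r ^ 2 := by
    refine integral_congr fun r hr => ?_
    rw [uIcc_of_le hr₁0.le] at hr
    rcases hr.1.eq_or_lt with rfl | hr0
    · simp
    rw [hmass r hr, (hderiv r ⟨hr0, hr.2.trans_lt hr₁ξ⟩).1.deriv]
    field_simp [(hsol.pos r hr).ne', hr0.ne']
  rw [hQ, hsol.integral_rpow_mul_sq_eq_add hr₁0.le, hbdry]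
  ring

theorem stmt_6 (ν ξ₁ : ℝ) (hν : 1 < ν) (hν5 : ν < 5) (hξ : 0 < ξ₁)
    (θ : ℝ → ℝ) (hC2 : ContDiffOn ℝ 2 θ (Set.Icc 0 ξ₁))
    (hode : ∀ r ∈ Set.Ioo 0 ξ₁,
      deriv (deriv θ) r + (2 / r) * deriv θ r + θ r ^ ν = 0)
    (h0 : θ 0 = 1) (h0' : deriv θ 0 = 0)
    (hpos : ∀ r ∈ Set.Ico 0 ξ₁, 0 < θ r)
    (r₁ : ℝ) (hr₁ : r₁ ∈ Set.Ioo 0 ξ₁)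
    (hcrit : (ν - 1) * r₁ * deriv θ r₁ + 2 * θ r₁ = 0)
    (hint : (∫ r in (0:ℝ)..r₁, θ r ^ ν * r ^ 2) = (2 / (ν - 1)) * θ r₁ * r₁) :
    (∫ r in (0:ℝ)..r₁, θ r ^ ν * r ^ 2) =
      (r₁ ^ 3 / 3) * θ r₁ ^ ν + (ν / 6) * (2 / (ν - 1)) ^ 2 * θ r₁ * r₁ +
      (ν / 6) * ∫ r in (0:ℝ)..r₁,
        ((r * deriv θ r + θ r) / (θ r ^ 2 * r ^ 2)) *
          (∫ s in (0:ℝ)..r, θ s ^ ν * s ^ 2) ^ 2 :=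
  stmt_6_general ν ξ₁ θ hC2 hode hpos r₁ hr₁ hint
end

section
/- Let θ be the Lane–Emden function of index ν (1 < ν < 5), positive on [0, ξ₁), with θ(0)=1, θ'(0)=0, satisfying −r²θ'(r) = ∫₀^r θ^ν s² ds. Then for r₁ ∈ (0, ξ₁) with θ'(r₁) r₁² = −(2/(ν−1)) θ(r₁) r₁, the following identity holds: ∫₀^{r₁} (1/(θ(r)² r²)) (∫₀^r θ(s)^ν s² ds)² dr = (2/(ν−1)) r₁ − ∫₀^{r₁} r² θ(r)^{ν−1} dr. -/
/-!
With `g r = ∫₀^r θ^ν s² ds`, the integral form of the Lane–Emden equation reads `g = -r² θ'`,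
hence `(g / θ)' = r² θ^(ν-1) + g² / (r² θ²)`. Integrating over `[0, r₁]` gives the identity,
and the condition at `r₁` turns the boundary term `g r₁ / θ r₁` into `2 r₁ / (ν - 1)`.
Since this derivative is nonnegative it is automatically integrable, so the behaviour of
`g r / r` near `0` never has to be examined.
-/

open Set intervalIntegral MeasureTheory

theorem hasDerivAt_integral_of_continuousOn {f : ℝ → ℝ} {a b r : ℝ}
    (hf : ContinuousOn f (Icc a b)) (hr : r ∈ Ioo a b) :
    HasDerivAt (fun u => ∫ x in a..u, f x) (f r) r :=
  integral_hasDerivAt_right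
    ((hf.mono (Icc_subset_Icc le_rfl hr.2.le)).intervalIntegrable_of_Icc hr.1.le)
    ((hf.mono Ioo_subset_Icc_self).stronglyMeasurableAtFilter isOpen_Ioo r hr)
    (hf.continuousAt (Icc_mem_nhds hr.1 hr.2))

theorem hasDerivAt_div_of_neg_sq_mul_deriv_eq {g θ : ℝ → ℝ} {ν r θ' : ℝ} (hr : r ≠ 0)
    (hθr : 0 < θ r) (hθ : HasDerivAt θ θ' r) (hg : HasDerivAt g (θ r ^ ν * r ^ 2) r)
    (hgθ : -r ^ 2 * θ' = g r) :
    HasDerivAt (fun s => g s / θ s)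
      (1 / (θ r ^ 2 * r ^ 2) * g r ^ 2 + r ^ 2 * θ r ^ (ν - 1)) r := by
  refine (hg.div hθ hθr.ne').congr_deriv ?_
  have hpow : θ r ^ ν = θ r ^ (ν - 1) * θ r := by
    rw [← Real.rpow_add_one hθr.ne', sub_add_cancel]
  rw [← hgθ, hpow]
  field_simp
  ring

theorem integral_inv_sq_mul_sq_integral_eq {θ : ℝ → ℝ} {ν b : ℝ} (hb : 0 ≤ b)
    (hθc : ContinuousOn θ (Icc 0 b)) (hθd : ∀ r ∈ Ioo 0 b, DifferentiableAt ℝ θ r)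
    (hpos : ∀ r ∈ Icc 0 b, 0 < θ r)
    (hint : ∀ r ∈ Ioo 0 b, -r ^ 2 * deriv θ r = ∫ s in (0:ℝ)..r, θ s ^ ν * s ^ 2) :
    ∫ r in (0:ℝ)..b, 1 / (θ r ^ 2 * r ^ 2) * (∫ s in (0:ℝ)..r, θ s ^ ν * s ^ 2) ^ 2 =
      (∫ s in (0:ℝ)..b, θ s ^ ν * s ^ 2) / θ b -
        ∫ r in (0:ℝ)..b, r ^ 2 * θ r ^ (ν - 1) := by
  set g : ℝ → ℝ := fun r => ∫ s in (0:ℝ)..r, θ s ^ ν * s ^ 2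
  set u : ℝ → ℝ := fun r => 1 / (θ r ^ 2 * r ^ 2) * g r ^ 2
  set ψ : ℝ → ℝ := fun r => r ^ 2 * θ r ^ (ν - 1)
  have hθ0 : ∀ r ∈ Icc 0 b, θ r ≠ 0 := fun r hr => (hpos r hr).ne'
  have hf : ContinuousOn (fun s => θ s ^ ν * s ^ 2) (Icc 0 b) :=
    (hθc.rpow_const fun s hs => Or.inl (hθ0 s hs)).mul (continuousOn_pow 2)
  have hψ : IntervalIntegrable ψ volume 0 b :=
    ContinuousOn.intervalIntegrable_of_Icc hb <|
      (continuousOn_pow 2).mul (hθc.rpow_const fun s hs => Or.inl (hθ0 s hs))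
  have hG : ContinuousOn (fun r => g r / θ r) (Icc 0 b) := by
    refine ContinuousOn.div ?_ hθc hθ0
    have := continuousOn_primitive_interval (μ := volume) (a := 0) (b := b)
      (by simpa only [uIcc_of_le hb] using hf.integrableOn_Icc)
    simpa only [uIcc_of_le hb] using this
  have hG' : ∀ r ∈ Ioo 0 b, HasDerivAt (fun r => g r / θ r) (u r + ψ r) r := fun r hr =>
    hasDerivAt_div_of_neg_sq_mul_deriv_eq hr.1.ne' (hpos r (Ioo_subset_Icc_self hr))
      (hθd r hr).hasDerivAt (hasDerivAt_integral_of_continuousOn hf hr) (hint r hr)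
  have hG'int : IntervalIntegrable (fun r => u r + ψ r) volume 0 b :=
    (intervalIntegrable_iff_integrableOn_Ioc_of_le hb).2 <|
      integrableOn_deriv_of_nonneg hG hG' fun r hr => by
        have := hpos r (Ioo_subset_Icc_self hr)
        positivity
  calc ∫ r in (0:ℝ)..b, u r
      = ∫ r in (0:ℝ)..b, ((u r + ψ r) - ψ r) := by simp only [add_sub_cancel_right]
    _ = g b / θ b - ∫ r in (0:ℝ)..b, ψ r := by
      rw [integral_sub hG'int hψ, integral_eq_sub_of_hasDerivAt_of_le hb hG hG' hG'int]
      simp [g]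

theorem stmt_8_general (ν ξ₁ : ℝ)
    (θ : ℝ → ℝ) (hC2 : ContDiffOn ℝ 2 θ (Set.Icc 0 ξ₁))
    (hpos : ∀ r ∈ Set.Ico 0 ξ₁, 0 < θ r)
    (hint : ∀ r ∈ Set.Ioo 0 ξ₁,
      -r ^ 2 * deriv θ r = ∫ s in (0:ℝ)..r, θ s ^ ν * s ^ 2)
    (r₁ : ℝ) (hr₁ : r₁ ∈ Set.Ioo 0 ξ₁)
    (hcrit : deriv θ r₁ * r₁ ^ 2 = -(2 / (ν - 1)) * θ r₁ * r₁) :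
    (∫ r in (0:ℝ)..r₁,
        (1 / (θ r ^ 2 * r ^ 2)) * (∫ s in (0:ℝ)..r, θ s ^ ν * s ^ 2) ^ 2) =
      (2 / (ν - 1)) * r₁ - ∫ r in (0:ℝ)..r₁, r ^ 2 * θ r ^ (ν - 1) := by
  obtain ⟨hr₁0, hr₁ξ⟩ := hr₁
  have hIoo : ∀ r ∈ Ioo 0 r₁, r ∈ Ioo 0 ξ₁ := fun r hr => ⟨hr.1, hr.2.trans hr₁ξ⟩
  rw [integral_inv_sq_mul_sq_integral_eq hr₁0.le
    (hC2.continuousOn.mono (Icc_subset_Icc le_rfl hr₁ξ.le))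
    (fun r hr => (hC2.differentiableOn two_ne_zero).differentiableAt
      (Icc_mem_nhds (hIoo r hr).1 (hIoo r hr).2))
    (fun r hr => hpos r ⟨hr.1, hr.2.trans_lt hr₁ξ⟩)
    (fun r hr => hint r (hIoo r hr)), ← hint r₁ ⟨hr₁0, hr₁ξ⟩]
  have hθr₁ : θ r₁ ≠ 0 := (hpos r₁ ⟨hr₁0.le, hr₁ξ⟩).ne'
  congr 1
  rw [div_eq_iff hθr₁]
  linear_combination -hcrit

theorem stmt_8 (ν ξ₁ : ℝ) (hν : 1 < ν) (hν5 : ν < 5) (hξ : 0 < ξ₁)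
    (θ : ℝ → ℝ) (hC2 : ContDiffOn ℝ 2 θ (Set.Icc 0 ξ₁))
    (hode : ∀ r ∈ Set.Ioo 0 ξ₁,
      deriv (deriv θ) r + (2 / r) * deriv θ r + θ r ^ ν = 0)
    (h0 : θ 0 = 1) (h0' : deriv θ 0 = 0)
    (hpos : ∀ r ∈ Set.Ico 0 ξ₁, 0 < θ r)
    (hint : ∀ r ∈ Set.Ioo 0 ξ₁,
      -r ^ 2 * deriv θ r = ∫ s in (0:ℝ)..r, θ s ^ ν * s ^ 2)
    (r₁ : ℝ) (hr₁ : r₁ ∈ Set.Ioo 0 ξ₁)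
    (hcrit : deriv θ r₁ * r₁ ^ 2 = -(2 / (ν - 1)) * θ r₁ * r₁) :
    (∫ r in (0:ℝ)..r₁,
        (1 / (θ r ^ 2 * r ^ 2)) * (∫ s in (0:ℝ)..r, θ s ^ ν * s ^ 2) ^ 2) =
      (2 / (ν - 1)) * r₁ - ∫ r in (0:ℝ)..r₁, r ^ 2 * θ r ^ (ν - 1) :=
  stmt_8_general ν ξ₁ θ hC2 hpos hint r₁ hr₁ hcrit
end

section
/- Let ν ≥ 1 and let θ : [0, ∞) → ℝ be continuous with θ(r)^ν truncated at 0 (i.e., consider θ₊^ν where θ₊ = max{0,θ}), and suppose ψ : [0, ξ₁] → ℝ is a C² solution on (0, ξ₁) of ψ'' + (2/r)ψ' − (j(j+1)/r²)ψ + ν θ₊(r)^{ν−1} ψ = 0 for some integer j ≥ 1, with ψ(r) > 0 and ψ'(r) > 0 for all sufficiently small r > 0. If ν θ₊(r)^{ν−1} r² < j(j+1) for all r ∈ [0, ξ₁], then ψ'(r) > 0 for all r ∈ (0, ξ₁), i.e., ψ is strictly increasing on (0, ξ₁). -/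
/-!
Consider `w r = r² ψ'(r)`: the equation says exactly
`w' = (j(j+1) - ν θ₊^{ν-1} r²) ψ`, so `w' > 0` wherever `ψ > 0`. If `ψ'` had a first
nonpositive point `c`, then `ψ` would increase, hence stay positive, up to `c`, so `w`
would increase there too and `c² ψ'(c) = w c > 0`, a contradiction.
-/

open Set

lemma exists_first_nonpos_of_continuousOn {f : ℝ → ℝ} {a b : ℝ} (hab : a ≤ b)
    (hf : ContinuousOn f (Icc a b)) (ha : 0 < f a) (hb : f b ≤ 0) :
    ∃ c ∈ Ioc a b, f c ≤ 0 ∧ ∀ x ∈ Ico a c, 0 < f x := by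
  set S := Icc a b ∩ f ⁻¹' Iic 0
  have hS : IsCompact S :=
    isCompact_Icc.of_isClosed_subset
      (hf.preimage_isClosed_of_isClosed isClosed_Icc isClosed_Iic) inter_subset_left
  have hcS : sInf S ∈ S := hS.sInf_mem ⟨b, ⟨hab, le_rfl⟩, hb⟩
  have hac : a < sInf S := hcS.1.1.lt_of_ne fun h => (h ▸ hcS.2 : f a ≤ 0).not_gt ha
  refine ⟨sInf S, ⟨hac, hcS.1.2⟩, hcS.2, fun x hx => ?_⟩
  by_contra! hfx
  exact (csInf_le hS.bddBelow ⟨⟨hx.1, hx.2.le.trans hcS.1.2⟩, hfx⟩).not_gt hx.2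

lemma hasDerivAt_sq_mul_deriv_of_radial_eq {ψ q : ℝ → ℝ} {k r : ℝ} (hr : r ≠ 0)
    (hψ' : DifferentiableAt ℝ (deriv ψ) r)
    (hode : deriv (deriv ψ) r + (2 / r) * deriv ψ r - (k / r ^ 2) * ψ r + q r * ψ r = 0) :
    HasDerivAt (fun x => x ^ 2 * deriv ψ x) ((k - q r * r ^ 2) * ψ r) r := by
  refine ((hasDerivAt_pow 2 r).fun_mul hψ'.hasDerivAt).congr_deriv ?_
  field_simp at hode
  linear_combination hode

theorem deriv_pos_of_deriv_sq_mul_deriv_pos {ψ : ℝ → ℝ} {b : ℝ}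
    (hψ : ContinuousOn ψ (Ioo 0 b)) (hψ' : DifferentiableOn ℝ (deriv ψ) (Ioo 0 b))
    (hsmall : ∃ δ > 0, ∀ r ∈ Ioo 0 δ, 0 < ψ r ∧ 0 < deriv ψ r)
    (hw : ∀ r ∈ Ioo 0 b, 0 < ψ r → 0 < deriv (fun x => x ^ 2 * deriv ψ x) r) :
    ∀ r ∈ Ioo 0 b, 0 < deriv ψ r := by
  intro r₀ hr₀
  by_contra! hr₀neg
  obtain ⟨δ, hδ, hsmall⟩ := hsmall
  obtain ⟨a, ha, haδr₀⟩ := exists_between (lt_min hδ hr₀.1)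
  have har₀ : a < r₀ := haδr₀.trans_le (min_le_right δ r₀)
  obtain ⟨hψa, hψ'a⟩ := hsmall a ⟨ha, haδr₀.trans_le (min_le_left δ r₀)⟩
  have hsub : Icc a r₀ ⊆ Ioo 0 b := fun x hx => ⟨ha.trans_le hx.1, hx.2.trans_lt hr₀.2⟩
  obtain ⟨c, hc, hψ'c, hψ'pos⟩ :=
    exists_first_nonpos_of_continuousOn har₀.le (hψ'.continuousOn.mono hsub) hψ'a hr₀neg
  have hsubc : Icc a c ⊆ Ioo 0 b := (Icc_subset_Icc_right hc.2).trans hsub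
  have hψmono : StrictMonoOn ψ (Icc a c) :=
    strictMonoOn_of_deriv_pos (convex_Icc a c) (hψ.mono hsubc) fun x hx => by
      rw [interior_Icc] at hx
      exact hψ'pos x ⟨hx.1.le, hx.2⟩
  have hψpos : ∀ x ∈ Icc a c, 0 < ψ x := fun x hx =>
    hψa.trans_le (hψmono.monotoneOn ⟨le_rfl, hc.1.le⟩ hx hx.1)
  have hwmono : StrictMonoOn (fun x => x ^ 2 * deriv ψ x) (Icc a c) :=
    strictMonoOn_of_deriv_pos (convex_Icc a c)
      ((continuousOn_pow 2).mul (hψ'.continuousOn.mono hsubc)) fun x hx => by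
        rw [interior_Icc] at hx
        exact hw x (hsubc (Ioo_subset_Icc_self hx)) (hψpos x (Ioo_subset_Icc_self hx))
  have hwac : a ^ 2 * deriv ψ a < c ^ 2 * deriv ψ c :=
    hwmono ⟨le_rfl, hc.1.le⟩ ⟨hc.1.le, le_rfl⟩ hc.1
  nlinarith [mul_pos (pow_pos ha 2) hψ'a, sq_nonneg c]

theorem stmt_11_general (ν ξ₁ : ℝ) (j : ℕ)
    (θ : ℝ → ℝ)
    (ψ : ℝ → ℝ) (hψ : ContDiffOn ℝ 2 ψ (Set.Ioo 0 ξ₁))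
    (hode : ∀ r ∈ Set.Ioo 0 ξ₁,
      deriv (deriv ψ) r + (2 / r) * deriv ψ r -
        ((j : ℝ) * ((j : ℝ) + 1) / r ^ 2) * ψ r +
        ν * (max 0 (θ r)) ^ (ν - 1) * ψ r = 0)
    (hsmall : ∃ δ > 0, ∀ r ∈ Set.Ioo (0:ℝ) δ, 0 < ψ r ∧ 0 < deriv ψ r)
    (hbound : ∀ r ∈ Set.Icc 0 ξ₁,
      ν * (max 0 (θ r)) ^ (ν - 1) * r ^ 2 < (j : ℝ) * ((j : ℝ) + 1)) :
    ∀ r ∈ Set.Ioo 0 ξ₁, 0 < deriv ψ r := by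
  have hψ' : DifferentiableOn ℝ (deriv ψ) (Ioo 0 ξ₁) :=
    (hψ.deriv_of_isOpen isOpen_Ioo (by norm_num)).differentiableOn one_ne_zero
  refine deriv_pos_of_deriv_sq_mul_deriv_pos hψ.continuousOn hψ' hsmall fun r hr hψr => ?_
  rw [(hasDerivAt_sq_mul_deriv_of_radial_eq (q := fun r => ν * (max 0 (θ r)) ^ (ν - 1))
    hr.1.ne' (hψ'.differentiableAt (isOpen_Ioo.mem_nhds hr)) (hode r hr)).deriv]
  exact mul_pos (sub_pos.2 (hbound r (Ioo_subset_Icc_self hr))) hψr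

theorem stmt_11 (ν ξ₁ : ℝ) (hν : 1 ≤ ν) (hξ : 0 < ξ₁) (j : ℕ) (hj : 1 ≤ j)
    (θ : ℝ → ℝ) (hθ : ContinuousOn θ (Set.Ici 0))
    (ψ : ℝ → ℝ) (hψ : ContDiffOn ℝ 2 ψ (Set.Ioo 0 ξ₁))
    (hode : ∀ r ∈ Set.Ioo 0 ξ₁,
      deriv (deriv ψ) r + (2 / r) * deriv ψ r -
        ((j : ℝ) * ((j : ℝ) + 1) / r ^ 2) * ψ r +
        ν * (max 0 (θ r)) ^ (ν - 1) * ψ r = 0)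
    (hsmall : ∃ δ > 0, ∀ r ∈ Set.Ioo (0:ℝ) δ, 0 < ψ r ∧ 0 < deriv ψ r)
    (hbound : ∀ r ∈ Set.Icc 0 ξ₁,
      ν * (max 0 (θ r)) ^ (ν - 1) * r ^ 2 < (j : ℝ) * ((j : ℝ) + 1)) :
    ∀ r ∈ Set.Ioo 0 ξ₁, 0 < deriv ψ r :=
  stmt_11_general ν ξ₁ j θ ψ hψ hode hsmall hbound
end

section
/- Let j ≥ 1 be an integer, ξ₁ > 0, and q continuous on [0, ξ₁] with 0 ≤ q(r) r² < j(j+1) for all r ∈ [0, ξ₁]. Suppose y is a C² solution of −(1/r²)(r² y')' + (j(j+1)/r²) y = q(r) y on (0, ξ₁) with y(r)/r^j → 1 as r → 0⁺ (in particular y is not identically zero and r² y y' → 0 at 0). Then the boundary condition ((j+1)/r) y + dy/dr = 0 at r = ξ₁ cannot hold. -/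
/-!
By the equation, the energy `E r = r² y y'` has derivative
`(r² y')' y + r² y'² = (j(j+1) - q r²) y² + r² y'² ≥ 0`. Hence `E` is nondecreasing on
`(0, ξ₁]`, starts at `0` as `r → 0⁺`, and is `≤ 0` at `ξ₁` under the boundary condition, so it
vanishes identically; then its derivative vanishes, forcing `y ≡ 0`, which contradicts
`y r / r ^ j → 1`.
-/

open Set Filter Topology

/-- For `s = Ioc a b`, `derivWithin` keeps the energy continuous up to `b`, where `y` is
only one-sidedly differentiable. -/
noncomputable def radialEnergy (y : ℝ → ℝ) (s : Set ℝ) (r : ℝ) : ℝ :=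
  r ^ 2 * y r * derivWithin y s r

theorem MonotoneOn.eqOn_zero_of_tendsto_nhdsGT {F : ℝ → ℝ} {a b : ℝ}
    (hF : MonotoneOn F (Ioc a b)) (ha : Tendsto F (𝓝[>] a) (𝓝 0)) (hb : F b ≤ 0) :
    EqOn F 0 (Ioc a b) := by
  intro x hx
  have hbx : b ∈ Ioc a b := ⟨hx.1.trans_le hx.2, le_rfl⟩
  refine le_antisymm ((hF hx hbx hx.2).trans hb) (le_of_tendsto ha ?_)
  filter_upwards [Ioo_mem_nhdsGT hx.1] with t ht
  exact hF ⟨ht.1, ht.2.le.trans hx.2⟩ hx ht.2.le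

section RadialEnergy

variable {y q : ℝ → ℝ} {c r : ℝ}

theorem hasDerivAt_sq_mul_mul_deriv_of_ode (hr : r ≠ 0) (hy : DifferentiableAt ℝ y r)
    (hy' : DifferentiableAt ℝ (deriv y) r)
    (hode : -(1 / r ^ 2) * deriv (fun s => s ^ 2 * deriv y s) r + c / r ^ 2 * y r = q r * y r) :
    HasDerivAt (fun s => s ^ 2 * y s * deriv y s)
      ((c - q r * r ^ 2) * y r ^ 2 + r ^ 2 * deriv y r ^ 2) r := by
  have hflux : deriv (fun s => s ^ 2 * deriv y s) r = (c - q r * r ^ 2) * y r := by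
    field_simp at hode
    linear_combination -hode
  have hG : HasDerivAt (fun s => s ^ 2 * deriv y s) (deriv (fun s => s ^ 2 * deriv y s) r) r :=
    ((differentiableAt_pow 2).mul hy').hasDerivAt
  have h : HasDerivAt (fun s => s ^ 2 * deriv y s * y s)
      ((c - q r * r ^ 2) * y r * y r + r ^ 2 * deriv y r * deriv y r) r :=
    hflux ▸ hG.mul hy.hasDerivAt
  convert h using 1
  · funext s; ring
  · ring

variable {a b : ℝ}

theorem hasDerivAt_radialEnergy (ha : 0 ≤ a) (hy : ContDiffOn ℝ 2 y (Ioc a b))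
    (hr : r ∈ Ioo a b)
    (hode : -(1 / r ^ 2) * deriv (fun s => s ^ 2 * deriv y s) r + c / r ^ 2 * y r = q r * y r) :
    HasDerivAt (radialEnergy y (Ioc a b))
      ((c - q r * r ^ 2) * y r ^ 2 + r ^ 2 * deriv y r ^ 2) r := by
  have hy₂ : ContDiffAt ℝ 2 y r := hy.contDiffAt (Ioc_mem_nhds hr.1 hr.2)
  have h := hasDerivAt_sq_mul_mul_deriv_of_ode (ha.trans_lt hr.1).ne'
    (hy₂.differentiableAt two_ne_zero)
    ((hy₂.derivWithin (m := 1) le_rfl).differentiableAt one_ne_zero) hode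
  refine h.congr_of_eventuallyEq ?_
  filter_upwards [Ioo_mem_nhds hr.1 hr.2] with s hs
  rw [radialEnergy, derivWithin_of_mem_nhds (Ioc_mem_nhds hs.1 hs.2)]

theorem radialEnergy_nonpos_of_robin {s : Set ℝ} {κ : ℝ} (hκ : 0 < κ)
    (hs : UniqueDiffWithinAt ℝ s r) (hbc : κ * y r + deriv y r = 0) :
    radialEnergy y s r ≤ 0 := by
  by_cases hd : DifferentiableAt ℝ y r
  · have hy' : derivWithin y s r = -(κ * y r) := by
      rw [hd.derivWithin hs]; linarith
    rw [radialEnergy, hy']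
    nlinarith [mul_nonneg (mul_nonneg (sq_nonneg r) hκ.le) (sq_nonneg (y r))]
  · rw [deriv_zero_of_not_differentiableAt hd, add_zero] at hbc
    simp [radialEnergy, (mul_eq_zero.mp hbc).resolve_left hκ.ne']

theorem eqOn_zero_of_radialEnergy (ha : 0 ≤ a) (hy : ContDiffOn ℝ 2 y (Ioc a b))
    (hode : ∀ r ∈ Ioo a b,
      -(1 / r ^ 2) * deriv (fun s => s ^ 2 * deriv y s) r + c / r ^ 2 * y r = q r * y r)
    (hq : ∀ r ∈ Ioo a b, q r * r ^ 2 < c)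
    (hE₀ : Tendsto (radialEnergy y (Ioc a b)) (𝓝[>] a) (𝓝 0))
    (hEb : radialEnergy y (Ioc a b) b ≤ 0) :
    EqOn y 0 (Ioo a b) := by
  have hderiv r (hr : r ∈ Ioo a b) := hasDerivAt_radialEnergy ha hy hr (hode r hr)
  have hcont : ContinuousOn (radialEnergy y (Ioc a b)) (Ioc a b) :=
    ((continuous_pow 2).continuousOn.mul hy.continuousOn).mul
      (hy.continuousOn_derivWithin (uniqueDiffOn_Ioc a b) one_le_two)
  have hmono : MonotoneOn (radialEnergy y (Ioc a b)) (Ioc a b) := by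
    refine monotoneOn_of_deriv_nonneg (convex_Ioc a b) hcont ?_ ?_ <;> rw [interior_Ioc]
    · exact fun r hr => (hderiv r hr).differentiableAt.differentiableWithinAt
    · intro r hr
      rw [(hderiv r hr).deriv]
      nlinarith [hq r hr, sq_nonneg (y r), sq_nonneg (r * deriv y r)]
  have hzero := hmono.eqOn_zero_of_tendsto_nhdsGT hE₀ hEb
  intro r hr
  have hflat : (c - q r * r ^ 2) * y r ^ 2 + r ^ 2 * deriv y r ^ 2 = 0 := by
    refine (hderiv r hr).unique ((hasDerivAt_const r 0).congr_of_eventuallyEq ?_)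
    filter_upwards [Ioo_mem_nhds hr.1 hr.2] with s hs
    exact hzero (Ioo_subset_Ioc_self hs)
  have hc : 0 < c - q r * r ^ 2 := sub_pos.mpr (hq r hr)
  have : y r ^ 2 = 0 := by nlinarith [sq_nonneg (y r), sq_nonneg (r * deriv y r)]
  exact pow_eq_zero_iff two_ne_zero |>.mp this

end RadialEnergy

theorem stmt_13_general (ξ₁ : ℝ) (hξ : 0 < ξ₁) (j : ℕ)
    (q y : ℝ → ℝ)
    (hqbound : ∀ r ∈ Set.Icc 0 ξ₁, 0 ≤ q r ∧ q r * r ^ 2 < (j : ℝ) * ((j : ℝ) + 1))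
    (hy : ContDiffOn ℝ 2 y (Set.Ioc 0 ξ₁))
    (hode : ∀ r ∈ Set.Ioo 0 ξ₁,
      -(1 / r ^ 2) * deriv (fun s => s ^ 2 * deriv y s) r +
        ((j : ℝ) * ((j : ℝ) + 1) / r ^ 2) * y r = q r * y r)
    (hasym : Filter.Tendsto (fun r => y r / r ^ j)
      (nhdsWithin 0 (Set.Ioi 0)) (nhds 1))
    (hlim : Filter.Tendsto (fun r => r ^ 2 * y r * deriv y r)
      (nhdsWithin 0 (Set.Ioi 0)) (nhds 0)) :
    ((j : ℝ) + 1) / ξ₁ * y ξ₁ + deriv y ξ₁ ≠ 0 := by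
  intro hbc
  have hE₀ : Tendsto (radialEnergy y (Ioc 0 ξ₁)) (𝓝[>] 0) (𝓝 0) := by
    refine hlim.congr' ?_
    filter_upwards [Ioo_mem_nhdsGT hξ] with r hr
    rw [radialEnergy, derivWithin_of_mem_nhds (Ioc_mem_nhds hr.1 hr.2)]
  have hEξ : radialEnergy y (Ioc 0 ξ₁) ξ₁ ≤ 0 :=
    radialEnergy_nonpos_of_robin (by positivity)
      (uniqueDiffOn_Ioc 0 ξ₁ ξ₁ ⟨hξ, le_rfl⟩) hbc
  have hy₀ : EqOn y 0 (Ioo 0 ξ₁) :=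
    eqOn_zero_of_radialEnergy le_rfl hy hode
      (fun r hr => (hqbound r (Ioo_subset_Icc_self hr)).2) hE₀ hEξ
  refine one_ne_zero (tendsto_nhds_unique hasym (tendsto_const_nhds.congr' ?_))
  filter_upwards [Ioo_mem_nhdsGT hξ] with r hr
  simp [hy₀ hr]

theorem stmt_13 (ξ₁ : ℝ) (hξ : 0 < ξ₁) (j : ℕ) (hj : 1 ≤ j)
    (q y : ℝ → ℝ) (hq : ContinuousOn q (Set.Icc 0 ξ₁))
    (hqbound : ∀ r ∈ Set.Icc 0 ξ₁, 0 ≤ q r ∧ q r * r ^ 2 < (j : ℝ) * ((j : ℝ) + 1))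
    (hy : ContDiffOn ℝ 2 y (Set.Ioc 0 ξ₁))
    (hode : ∀ r ∈ Set.Ioo 0 ξ₁,
      -(1 / r ^ 2) * deriv (fun s => s ^ 2 * deriv y s) r +
        ((j : ℝ) * ((j : ℝ) + 1) / r ^ 2) * y r = q r * y r)
    (hasym : Filter.Tendsto (fun r => y r / r ^ j)
      (nhdsWithin 0 (Set.Ioi 0)) (nhds 1))
    (hlim : Filter.Tendsto (fun r => r ^ 2 * y r * deriv y r)
      (nhdsWithin 0 (Set.Ioi 0)) (nhds 0)) :
    ((j : ℝ) + 1) / ξ₁ * y ξ₁ + deriv y ξ₁ ≠ 0 :=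
  stmt_13_general ξ₁ hξ j q y hqbound hy hode hasym hlim
end

section
/- Let X be a Banach space, G : B(θ, δ₀) ⊆ X → X Fréchet differentiable at θ with θ = G(θ), and suppose 1 − DG(θ) has a bounded inverse with ‖(1−DG(θ))^{-1}‖ ≤ K. Let g ∈ X, and suppose the remainder ω(h) := G(θ+h) − G(θ) − DG(θ)h satisfies ‖ω(h)‖ ≤ C‖h‖² and ‖ω(h₂) − ω(h₁)‖ ≤ C(‖h₁‖ + ‖h₂‖)‖h₂ − h₁‖ for ‖h₁‖, ‖h₂‖ ≤ δ₀/2. Then there exist ε₁ > 0 and Λ > 0 such that for each 0 < ε ≤ ε₁ the equation u = ε g + G(u) has a solution u = θ + ε w with ‖w‖ ≤ Λ; moreover ‖u − θ‖ ≤ Λ ε. -/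
theorem stmt_15 {X : Type*} [NormedAddCommGroup X] [NormedSpace ℝ X] [CompleteSpace X]
    (G : X → X) (θ g : X) (DG : X →L[ℝ] X) (δ₀ C K : ℝ)
    (hδ : 0 < δ₀) (hC : 0 < C) (hKpos : 0 < K)
    (hFD : HasFDerivAt G DG θ)
    (hfix : G θ = θ)
    (inv : X →L[ℝ] X)
    (hinv1 : ∀ x : X, inv (x - DG x) = x)
    (hinv2 : ∀ x : X, inv x - DG (inv x) = x)
    (hK : ‖inv‖ ≤ K)
    (hω1 : ∀ h : X, ‖h‖ ≤ δ₀ / 2 → ‖G (θ + h) - G θ - DG h‖ ≤ C * ‖h‖ ^ 2)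
    (hω2 : ∀ h₁ h₂ : X, ‖h₁‖ ≤ δ₀ / 2 → ‖h₂‖ ≤ δ₀ / 2 →
      ‖(G (θ + h₂) - G θ - DG h₂) - (G (θ + h₁) - G θ - DG h₁)‖ ≤
        C * (‖h₁‖ + ‖h₂‖) * ‖h₂ - h₁‖) :
    ∃ ε₁ > (0:ℝ), ∃ Λ > (0:ℝ), ∀ ε : ℝ, 0 < ε → ε ≤ ε₁ →
      ∃ w : X, ‖w‖ ≤ Λ ∧ θ + ε • w = ε • g + G (θ + ε • w) ∧
        ‖(θ + ε • w) - θ‖ ≤ Λ * ε := by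
  set Λ : ℝ := 2 * K * ‖g‖ + 1 with hΛdef
  have hΛ : 0 < Λ := by positivity
  have hKg : K * ‖g‖ ≤ Λ / 2 := by nlinarith [norm_nonneg g]
  refine ⟨min (δ₀ / (2 * Λ)) (1 / (4 * K * C * Λ)), by positivity, Λ, hΛ, ?_⟩
  intro ε hε hεle
  have hε1 : ε ≤ δ₀ / (2 * Λ) := hεle.trans (min_le_left _ _)
  have hε2 : ε * (4 * K * C * Λ) ≤ 1 := by
    have h := hεle.trans (min_le_right _ _)
    rw [le_div_iff₀ (by positivity)] at h
    linarith
  have harg : ∀ w : X, ‖w‖ ≤ Λ → ‖ε • w‖ ≤ δ₀ / 2 := by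
    intro w hw
    rw [norm_smul, Real.norm_of_nonneg hε.le]
    calc ε * ‖w‖ ≤ (δ₀ / (2 * Λ)) * Λ :=
          mul_le_mul hε1 hw (norm_nonneg w) (by positivity)
      _ = δ₀ / 2 := by field_simp
  set T : X → X := fun w => inv (g + ε⁻¹ • (G (θ + ε • w) - G θ - DG (ε • w))) with hT
  have hinvnorm : ∀ x : X, ‖inv x‖ ≤ K * ‖x‖ := fun x =>
    (inv.le_opNorm x).trans (mul_le_mul_of_nonneg_right hK (norm_nonneg x))
  have hself : ∀ w : X, ‖w‖ ≤ Λ → ‖T w‖ ≤ Λ := by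
    intro w hw
    have h1 := hω1 (ε • w) (harg w hw)
    have hεw : ‖ε • w‖ = ε * ‖w‖ := by
      rw [norm_smul, Real.norm_of_nonneg hε.le]
    have hbound : ‖g + ε⁻¹ • (G (θ + ε • w) - G θ - DG (ε • w))‖
        ≤ ‖g‖ + C * ε * Λ ^ 2 := by
      refine (norm_add_le _ _).trans ?_
      gcongr
      rw [norm_smul, Real.norm_of_nonneg (inv_nonneg.2 hε.le)]
      calc ε⁻¹ * ‖G (θ + ε • w) - G θ - DG (ε • w)‖
          ≤ ε⁻¹ * (C * ‖ε • w‖ ^ 2) := by gcongr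
        _ = C * ε * ‖w‖ ^ 2 := by
            rw [hεw]; field_simp
        _ ≤ C * ε * Λ ^ 2 := by gcongr <;> try exact norm_nonneg w
    calc ‖T w‖ ≤ K * (‖g‖ + C * ε * Λ ^ 2) :=
          (hinvnorm _).trans (by gcongr)
      _ ≤ Λ := by nlinarith
  have hcontr : ∀ w₁ w₂ : X, ‖w₁‖ ≤ Λ → ‖w₂‖ ≤ Λ →
      ‖T w₂ - T w₁‖ ≤ (1 / 2) * ‖w₂ - w₁‖ := by
    intro w₁ w₂ h1 h2
    have hdiff : T w₂ - T w₁ = inv (ε⁻¹ • ((G (θ + ε • w₂) - G θ - DG (ε • w₂))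
        - (G (θ + ε • w₁) - G θ - DG (ε • w₁)))) := by
      simp only [hT, ← map_sub]
      congr 1
      module
    have hω := hω2 (ε • w₁) (ε • w₂) (harg w₁ h1) (harg w₂ h2)
    have hεn : ∀ v : X, ‖ε • v‖ = ε * ‖v‖ := fun v => by
      rw [norm_smul, Real.norm_of_nonneg hε.le]
    have hsub : ε • w₂ - ε • w₁ = ε • (w₂ - w₁) := by rw [smul_sub]
    rw [hsub] at hω
    simp only [hεn] at hω
    calc ‖T w₂ - T w₁‖
        ≤ K * ‖ε⁻¹ • ((G (θ + ε • w₂) - G θ - DG (ε • w₂))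
            - (G (θ + ε • w₁) - G θ - DG (ε • w₁)))‖ := by
          rw [hdiff]; exact hinvnorm _
      _ ≤ K * (ε⁻¹ * (C * (ε * ‖w₁‖ + ε * ‖w₂‖) * (ε * ‖w₂ - w₁‖))) := by
          rw [norm_smul, Real.norm_of_nonneg (inv_nonneg.2 hε.le)]
          gcongr
      _ = K * C * ε * (‖w₁‖ + ‖w₂‖) * ‖w₂ - w₁‖ := by
          field_simp
      _ ≤ (1 / 2) * ‖w₂ - w₁‖ := by
          have hn : (0:ℝ) ≤ ‖w₂ - w₁‖ := norm_nonneg _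
          have hb : K * C * ε * (‖w₁‖ + ‖w₂‖) ≤ K * C * ε * (2 * Λ) := by
            have : (0:ℝ) ≤ K * C * ε := by positivity
            gcongr
            linarith
          have hb2 : K * C * ε * (2 * Λ) ≤ 1 / 2 := by nlinarith
          nlinarith
  -- Banach fixed point on the closed ball
  set s : Set X := Metric.closedBall (0 : X) Λ with hs
  have hsc : IsClosed s := Metric.isClosed_closedBall
  haveI : CompleteSpace s := hsc.completeSpace_coe
  haveI : Nonempty s := ⟨⟨0, by simp [hs, hΛ.le]⟩⟩
  have hmem : ∀ w : X, w ∈ s ↔ ‖w‖ ≤ Λ := fun w => mem_closedBall_zero_iff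
  set F : s → s := fun w => ⟨T w, (hmem _).2 (hself w ((hmem _).1 w.2))⟩ with hF
  have hc : ContractingWith (1 / 2 : NNReal) F := by
    constructor
    · rw [← NNReal.coe_lt_coe]; norm_num
    · apply LipschitzWith.of_dist_le_mul
      intro x y
      have h := hcontr y.1 x.1 ((hmem _).1 y.2) ((hmem _).1 x.2)
      rw [Subtype.dist_eq, Subtype.dist_eq, dist_eq_norm, dist_eq_norm]
      push_cast
      convert h using 2
  obtain ⟨x, hx⟩ : ∃ x : s, F x = x := ⟨hc.fixedPoint F, hc.fixedPoint_isFixedPt⟩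
  refine ⟨x.1, (hmem _).1 x.2, ?_, ?_⟩
  · have hTw : inv (g + ε⁻¹ • (G (θ + ε • x.1) - G θ - DG (ε • x.1))) = x.1 :=
      congrArg Subtype.val hx
    have key := hinv2 (g + ε⁻¹ • (G (θ + ε • x.1) - G θ - DG (ε • x.1)))
    rw [hTw] at key
    -- key : x.1 - DG x.1 = g + ε⁻¹ • (G (θ + ε • x.1) - G θ - DG (ε • x.1))
    have h2 := congrArg (fun v => ε • v) key
    simp only [smul_sub, smul_add, smul_inv_smul₀ hε.ne'] at h2
    rw [hfix] at h2
    have hDG : DG (ε • x.1) = ε • DG x.1 := map_smul _ _ _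
    rw [hDG] at h2
    -- h2 : ε • x.1 - ε • DG x.1 = ε • g + (G (θ + ε • x.1) - θ - ε • DG x.1)
    have h3 : θ + ε • x.1 - (ε • g + G (θ + ε • x.1)) =
        (ε • x.1 - ε • DG x.1) - (ε • g + (G (θ + ε • x.1) - θ - ε • DG x.1)) := by
      abel
    rw [h2, sub_self] at h3
    exact sub_eq_zero.1 h3
  · have : ‖θ + ε • x.1 - θ‖ = ε * ‖x.1‖ := by
      simp [norm_smul, Real.norm_of_nonneg hε.le]
    rw [this, mul_comm]
    exact mul_le_mul_of_nonneg_right ((hmem _).1 x.2) hε.le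
end
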